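/- Let $\lambda, \sigma_\mu, \delta > 0$, $g = \frac{2\lambda}{\sigma_\mu^2 (e^{\lambda\delta} - e^{-\lambda\delta})}$, and let $B_N$ be the $N \times N$ tridiagonal matrix with diagonal entries $e^{\lambda\delta} + e^{-\lambda\delta}$ except the last diagonal entry which is $e^{\lambda\delta}$, and off-diagonal entries $-1$. Let $\Sigma_N$ be the covariance matrix of $(\mu_{\delta}, \mu_{2\delta}, \ldots, \mu_{N\delta})$ where $\mu$ is an OU process with $\mu_0 = 0$, i.e., $(\Sigma_N)_{st} = \frac{\sigma_\mu^2}{2\lambda} e^{-\lambda\delta(s+t)}(e^{2\lambda\delta(s \wedge t)} - 1)$. Then $\Sigma_N^{-1} = g B_N$, i.e., $g \Sigma_N B_N = I_N$. -/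

import Mathlib

/-!
With `x = e^{λδ}` and times indexed from `1`, `(2λ/σ²) Σ_{st} = u(s ∧ t) v(s ∨ t)` where
`u n = xⁿ - x⁻ⁿ` and `v n = x⁻ⁿ` both solve the recurrence `y(k-1) + y(k+1) = (x + x⁻¹) y(k)`.
Such a product is the Green's function of the recurrence: the tridiagonal operator maps it to the
Wronskian `u(k+1)v(k) - u(k)v(k+1) = x - x⁻¹` on the diagonal and to zero off it. The first row
is handled by `u 0 = 0`, the last one (diagonal entry `x` instead of `x + x⁻¹`) by
`v(N+1) = x⁻¹ v(N)`.
-/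

open Matrix Finset

theorem sum_mul_tridiagonal {R : Type*} [CommRing R] {N : ℕ} (g d : ℕ → R) (hg : g 0 = 0)
    (t : Fin N) :
    ∑ j : Fin N, g (j + 1) *
        (if j = t then d j else if (j : ℕ) + 1 = t ∨ (t : ℕ) + 1 = j then -1 else 0) =
      d t * g (t + 1) - g t - if (t : ℕ) + 1 < N then g (t + 2) else 0 := by
  have hsummand : ∀ k n : ℕ, g (k + 1) *
      (if k = n then d k else if k + 1 = n ∨ n + 1 = k then -1 else 0) =
      (if k = n then d n * g (n + 1) else 0) - (if k = n - 1 then g n else 0) -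
        (if k = n + 1 then g (n + 2) else 0) := by
    intro k n
    -- for `n = 0` the truncated `n - 1` is harmless because `g 0 = 0`
    rcases n with _ | n <;> split_ifs <;> first | omega | (subst_vars; simp_all; try ring)
  simp only [Fin.ext_iff]
  rw [Fin.sum_univ_eq_sum_range (fun k => g (k + 1) *
      (if k = t then d k else if k + 1 = t ∨ (t : ℕ) + 1 = k then -1 else 0)),
    Finset.sum_congr rfl fun k _ => hsummand k t, sum_sub_distrib, sum_sub_distrib,
    sum_ite_eq', sum_ite_eq', sum_ite_eq']
  simp only [mem_range, t.isLt, if_true, show (t : ℕ) - 1 < N by omega]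

section Green

variable {R : Type*} [CommRing R] (u v : ℕ → R)

def greenFn (a k : ℕ) : R := u (min a k) * v (max a k)

variable {u v}

theorem greenFn_zero_right (hu : u 0 = 0) (a : ℕ) : greenFn u v a 0 = 0 := by
  simp [greenFn, hu]

theorem greenFn_succ_right_of_le {a n : ℕ} (h : a ≤ n) {q : R} (hv : v (n + 1) = q * v n) :
    greenFn u v a (n + 1) = q * greenFn u v a n := by
  simp only [greenFn, min_eq_left h, min_eq_left (h.trans n.le_succ), max_eq_right h,
    max_eq_right (h.trans n.le_succ), hv]
  ring

theorem greenFn_recurrence {T W : R} (hu : ∀ k, u k + u (k + 2) = T * u (k + 1))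
    (hv : ∀ k, v k + v (k + 2) = T * v (k + 1))
    (hW : ∀ k, u (k + 1) * v k - u k * v (k + 1) = W) (a k : ℕ) :
    T * greenFn u v a (k + 1) - greenFn u v a k - greenFn u v a (k + 2) =
      if a = k + 1 then W else 0 := by
  rcases lt_trichotomy a (k + 1) with h | rfl | h
  · simp only [greenFn, min_eq_left (by omega : a ≤ k), min_eq_left h.le,
      min_eq_left (by omega : a ≤ k + 2), max_eq_right (by omega : a ≤ k), max_eq_right h.le,
      max_eq_right (by omega : a ≤ k + 2), if_neg h.ne]
    linear_combination -(u a * hv k)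
  · simp only [greenFn, min_self, max_self, min_eq_right k.le_succ, max_eq_left k.le_succ,
      min_eq_left (by omega : k + 1 ≤ k + 2), max_eq_right (by omega : k + 1 ≤ k + 2), if_true]
    linear_combination -(v (k + 1) * hu k) + hW (k + 1)
  · simp only [greenFn, min_eq_right (by omega : k ≤ a), min_eq_right h.le,
      min_eq_right (by omega : k + 2 ≤ a), max_eq_left (by omega : k ≤ a), max_eq_left h.le,
      max_eq_left (by omega : k + 2 ≤ a), if_neg h.ne']
    linear_combination -(v a * hu k)

end Green

section OU

variable {K : Type*} [Field K] {x : K}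

theorem pow_sub_inv_pow_recurrence (hx : x ≠ 0) (k : ℕ) :
    (x ^ k - x⁻¹ ^ k) + (x ^ (k + 2) - x⁻¹ ^ (k + 2)) =
      (x + x⁻¹) * (x ^ (k + 1) - x⁻¹ ^ (k + 1)) := by
  linear_combination (x⁻¹ ^ k - x ^ k) * mul_inv_cancel₀ hx

theorem inv_pow_recurrence (hx : x ≠ 0) (k : ℕ) :
    x⁻¹ ^ k + x⁻¹ ^ (k + 2) = (x + x⁻¹) * x⁻¹ ^ (k + 1) := by
  linear_combination -(x⁻¹ ^ k * mul_inv_cancel₀ hx)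

theorem pow_sub_inv_pow_wronskian (hx : x ≠ 0) (k : ℕ) :
    (x ^ (k + 1) - x⁻¹ ^ (k + 1)) * x⁻¹ ^ k - (x ^ k - x⁻¹ ^ k) * x⁻¹ ^ (k + 1) =
      x - x⁻¹ := by
  have h : (x * x⁻¹) ^ k = 1 := by rw [mul_inv_cancel₀ hx, one_pow]
  linear_combination (x - x⁻¹) * h

def ouGreen (x : K) : ℕ → ℕ → K :=
  greenFn (fun n => x ^ n - x⁻¹ ^ n) (fun n => x⁻¹ ^ n)

variable (x) in
def ouGreenMatrix (N : ℕ) : Matrix (Fin N) (Fin N) K :=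
  of fun s t => ouGreen x (s + 1) (t + 1)

variable (x) in
def ouTridiag (N : ℕ) : Matrix (Fin N) (Fin N) K := of fun s t =>
  if s = t then (if (s : ℕ) = N - 1 then x else x + x⁻¹)
  else if (s : ℕ) + 1 = t ∨ (t : ℕ) + 1 = s then -1 else 0

theorem ouGreenMatrix_mul_ouTridiag (hx : x ≠ 0) (N : ℕ) :
    ouGreenMatrix x N * ouTridiag x N = (x - x⁻¹) • 1 := by
  ext s t
  have hrec : (x + x⁻¹) * ouGreen x (s + 1) (t + 1) - ouGreen x (s + 1) t -
      ouGreen x (s + 1) (t + 2) = ((x - x⁻¹) • 1 : Matrix (Fin N) (Fin N) K) s t := by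
    rw [ouGreen, greenFn_recurrence (pow_sub_inv_pow_recurrence hx) (inv_pow_recurrence hx)
      (pow_sub_inv_pow_wronskian hx)]
    simp [one_apply, Fin.ext_iff]
  simp only [mul_apply, ouGreenMatrix, ouTridiag, of_apply]
  rw [sum_mul_tridiagonal (ouGreen x (s + 1)) (fun j => if j = N - 1 then x else x + x⁻¹)
    (greenFn_zero_right (by simp) _) t]
  by_cases hnext : (t : ℕ) + 1 < N
  · rw [if_neg (by omega), if_pos hnext]
    linear_combination hrec
  · have hboundary : ouGreen x (s + 1) (t + 2) = x⁻¹ * ouGreen x (s + 1) (t + 1) :=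
      greenFn_succ_right_of_le (by omega) (pow_succ' _ _)
    rw [if_pos (by omega), if_neg hnext]
    linear_combination hrec + hboundary

end OU

theorem exp_mul_exp_sub_one_eq_ouGreen (L : ℝ) (a b : ℕ) :
    Real.exp (-(L * (a + b))) * (Real.exp (2 * L * min (a : ℝ) b) - 1) =
      ouGreen (Real.exp L) a b := by
  have hsum : (a + b : ℝ) = (min a b : ℕ) + (max a b : ℕ) := by
    exact_mod_cast (min_add_max a b).symm
  rw [hsum, ← Nat.cast_min, ouGreen, greenFn, ← Real.exp_neg, ← Real.exp_nat_mul,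
    ← Real.exp_nat_mul, ← Real.exp_nat_mul, sub_mul, mul_sub, ← Real.exp_add,
    ← Real.exp_add, ← Real.exp_add, mul_one]
  congr 2 <;> ring

/-- The inverse of the covariance matrix of an OU process sampled at times `δ, 2δ, …, Nδ`
is the explicit tridiagonal matrix `g B_N`: `g Σ_N B_N = I` and `Σ_N⁻¹ = g B_N`. -/
theorem stmt_5 (lam σμ δ : ℝ) (hlam : 0 < lam) (hσμ : 0 < σμ) (hδ : 0 < δ)
    (N : ℕ) (g : ℝ)
    (hg : g = 2 * lam / (σμ ^ 2 * (Real.exp (lam * δ) - Real.exp (-(lam * δ)))))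
    (Sig B : Matrix (Fin N) (Fin N) ℝ)
    (hSig : Sig = Matrix.of fun s t : Fin N =>
      σμ ^ 2 / (2 * lam) *
        Real.exp (-(lam * δ * (((s : ℕ) + 1 : ℝ) + ((t : ℕ) + 1 : ℝ)))) *
        (Real.exp (2 * lam * δ * min (((s : ℕ) + 1 : ℝ)) (((t : ℕ) + 1 : ℝ))) - 1))
    (hB : B = Matrix.of fun s t : Fin N =>
      if s = t then
        (if (s : ℕ) = N - 1 then Real.exp (lam * δ)
         else Real.exp (lam * δ) + Real.exp (-(lam * δ)))
      else if (s : ℕ) + 1 = (t : ℕ) ∨ (t : ℕ) + 1 = (s : ℕ) then -1 else 0) :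
    g • (Sig * B) = 1 ∧ Sig⁻¹ = g • B := by
  set x := Real.exp (lam * δ)
  have hSig' : Sig = (σμ ^ 2 / (2 * lam)) • ouGreenMatrix x N := by
    ext s t
    have hentry := exp_mul_exp_sub_one_eq_ouGreen (lam * δ) (s + 1) (t + 1)
    push_cast at hentry
    rw [hSig, of_apply, Matrix.smul_apply, ouGreenMatrix, of_apply, smul_eq_mul, ← hentry,
      mul_assoc 2 lam δ]
    ring
  have hB' : B = ouTridiag x N := by
    rw [hB, Real.exp_neg]
    rfl
  have hscalar : g * (σμ ^ 2 / (2 * lam)) * (x - x⁻¹) = 1 := by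
    have hsinh : x - x⁻¹ = 2 * Real.sinh (lam * δ) := by
      rw [Real.sinh_eq, Real.exp_neg]
      ring
    have hsinh_pos : 0 < Real.sinh (lam * δ) := Real.sinh_pos_iff.mpr (mul_pos hlam hδ)
    rw [hg, Real.exp_neg, hsinh]
    field_simp
  have hprod : g • (Sig * B) = 1 := by
    rw [hSig', hB', Matrix.smul_mul, ouGreenMatrix_mul_ouTridiag (Real.exp_pos _).ne',
      smul_smul, smul_smul, hscalar, one_smul]
  exact ⟨hprod, inv_eq_right_inv (by rwa [Matrix.mul_smul])⟩
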